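/- arXiv:solv-int/9812010 — 2 statements merged into one kernel-verified Lean document; each statement's English description precedes it below -/
import Mathlib

section
/- Let \kappa, \lambda be constants, t \ne -1, \Delta^\pm = \kappa t \pm \sqrt{\kappa^2 t^2 + \lambda t}. Suppose f, b11, b12, b22 satisfy the GMC equations in Tchebycheff coordinates (sin f \ne 0) and the constraint K + 2\kappa b12/sin f - \lambda = 0, where K = (b11 b22 - b12^2)/sin^2 f. Then A = (i/2)[[f_x, (e^{if} b11 - b12)/sin f - \Delta^+],[ (e^{-if} b11 - b12)/((t+1) sin f) - \Delta^+/(t+1), -f_x]] and B = (i/2)[[0, (e^{if} b12 - b22)/sin f + \Delta^- e^{if}],[ (e^{-if} b12 - b22)/((t+1) sin f) + (\Delta^- /(t+1)) e^{-if}, 0]] satisfy A_y - B_x + [A,B] = 0. -/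
open Matrix

noncomputable section

abbrev M2 := Matrix (Fin 2) (Fin 2) ℂ

/-- Partial derivative in `x` of a matrix-valued function, taken entrywise. -/
def pdx (A : ℝ → ℝ → M2) (x y : ℝ) : M2 :=
  Matrix.of fun i j => deriv (fun s => A s y i j) x

/-- Partial derivative in `y` of a matrix-valued function, taken entrywise. -/
def pdy (A : ℝ → ℝ → M2) (x y : ℝ) : M2 :=
  Matrix.of fun i j => deriv (fun s => A x s i j) y

/-- Smoothness of a matrix-valued function of `(x,y)`, entrywise. -/
def SmoothM (A : ℝ → ℝ → M2) : Prop :=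
  ∀ i j, ContDiff ℝ (⊤ : ℕ∞) (fun p : ℝ × ℝ => A p.1 p.2 i j)

/-- The curvature `A_y - B_x + [A,B]` of the pair `(A,B)`. -/
def curv (A B : ℝ → ℝ → M2) (x y : ℝ) : M2 :=
  pdy A x y - pdx B x y + (A x y * B x y - B x y * A x y)

/-- Partial derivative in `x` of a scalar function. -/
def px (u : ℝ → ℝ → ℝ) (x y : ℝ) : ℝ := deriv (fun s => u s y) x

/-- Partial derivative in `y` of a scalar function. -/
def py (u : ℝ → ℝ → ℝ) (x y : ℝ) : ℝ := deriv (fun s => u x s) y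

/-- Smoothness of a scalar function of `(x,y)`. -/
def Smooth2 (u : ℝ → ℝ → ℝ) : Prop := ContDiff ℝ (⊤ : ℕ∞) (fun p : ℝ × ℝ => u p.1 p.2)

/-- The Gauss–Mainardi–Codazzi equations in Tchebycheff coordinates. -/
def GMCT (f b11 b12 b22 : ℝ → ℝ → ℝ) : Prop :=
  ∀ x y : ℝ,
    py (px f) x y = (b12 x y ^ 2 - b11 x y * b22 x y) / Real.sin (f x y) ∧
    py b11 x y = px b12 x y +
      ((b22 x y - b12 x y * Real.cos (f x y)) / Real.sin (f x y)) * px f x y ∧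
    py b12 x y = px b22 x y -
      ((b11 x y - b12 x y * Real.cos (f x y)) / Real.sin (f x y)) * py f x y

lemma smooth2_right (u : ℝ → ℝ → ℝ) (hu : Smooth2 u) (x : ℝ) :
    ContDiff ℝ (⊤ : ℕ∞) (fun s => u x s) := hu.comp (contDiff_const.prodMk contDiff_id)

lemma smooth2_left (u : ℝ → ℝ → ℝ) (hu : Smooth2 u) (y : ℝ) :
    ContDiff ℝ (⊤ : ℕ∞) (fun s => u s y) := hu.comp (contDiff_id.prodMk contDiff_const)

lemma hasDerivAt_py (u : ℝ → ℝ → ℝ) (hu : Smooth2 u) (x y : ℝ) :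
    HasDerivAt (fun s => u x s) (py u x y) y :=
  ((smooth2_right u hu x).differentiable (by simp) y).hasDerivAt

lemma hasDerivAt_px (u : ℝ → ℝ → ℝ) (hu : Smooth2 u) (x y : ℝ) :
    HasDerivAt (fun s => u s y) (px u x y) x :=
  ((smooth2_left u hu y).differentiable (by simp) x).hasDerivAt

lemma px_eq_fderiv (u : ℝ → ℝ → ℝ) (hu : Smooth2 u) (x y : ℝ) :
    px u x y = fderiv ℝ (fun p : ℝ × ℝ => u p.1 p.2) (x, y) (1, 0) := by
  have h1 : HasDerivAt (fun r : ℝ => (r, y)) ((1 : ℝ), (0 : ℝ)) x :=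
    (hasDerivAt_id x).prodMk (hasDerivAt_const x y)
  have h2 := ((hu.differentiable (by simp) (x, y)).hasFDerivAt).comp_hasDerivAt x h1
  exact h2.deriv.symm ▸ rfl

lemma smooth2_px (u : ℝ → ℝ → ℝ) (hu : Smooth2 u) : Smooth2 (px u) := by
  have h : ContDiff ℝ (⊤ : ℕ∞) (fun p : ℝ × ℝ => fderiv ℝ (fun p : ℝ × ℝ => u p.1 p.2) p (1, 0)) :=
    (hu.fderiv_right (by simp)).clm_apply contDiff_const
  have he : (fun p : ℝ × ℝ => px u p.1 p.2) =
      fun p : ℝ × ℝ => fderiv ℝ (fun p : ℝ × ℝ => u p.1 p.2) p (1, 0) := by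
    funext p; exact px_eq_fderiv u hu p.1 p.2
  rw [Smooth2, he]; exact h


set_option maxHeartbeats 2000000 in
/-- Case 2, Tchebycheff: ZCR for the class `K + 2κ b12/sin f - λ = 0`,
with `Δ± = κt ± √(κ²t² + λt)` (either branch of the square root, over `ℂ`). -/
theorem zcr_tcheb_case2 (κ lam t : ℝ) (ht : t ≠ -1)
    (f b11 b12 b22 : ℝ → ℝ → ℝ)
    (hf : Smooth2 f) (h11 : Smooth2 b11) (h12 : Smooth2 b12) (h22 : Smooth2 b22)
    (hs : ∀ x y, Real.sin (f x y) ≠ 0)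
    (hgmc : GMCT f b11 b12 b22)
    (hcon : ∀ x y, (b11 x y * b22 x y - b12 x y ^ 2) / Real.sin (f x y) ^ 2
      + 2 * κ * b12 x y / Real.sin (f x y) - lam = 0) :
    ∀ sq : ℂ, sq ^ 2 = (κ : ℂ) ^ 2 * (t : ℂ) ^ 2 + (lam : ℂ) * t →
    ∀ Δp Δm : ℂ, Δp = (κ : ℂ) * t + sq → Δm = (κ : ℂ) * t - sq →
    ∀ x y, curv
      (fun x y => (Complex.I / 2) •
        !![((px f x y : ℝ) : ℂ),
            (Complex.exp (Complex.I * (f x y : ℝ)) * (b11 x y : ℝ) - (b12 x y : ℝ))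
              / ((Real.sin (f x y) : ℝ) : ℂ) - Δp;
           (Complex.exp (-(Complex.I * (f x y : ℝ))) * (b11 x y : ℝ) - (b12 x y : ℝ))
              / (((t : ℂ) + 1) * ((Real.sin (f x y) : ℝ) : ℂ)) - Δp / ((t : ℂ) + 1),
            -((px f x y : ℝ) : ℂ)])
      (fun x y => (Complex.I / 2) •
        !![0,
            (Complex.exp (Complex.I * (f x y : ℝ)) * (b12 x y : ℝ) - (b22 x y : ℝ))
              / ((Real.sin (f x y) : ℝ) : ℂ) + Δm * Complex.exp (Complex.I * (f x y : ℝ));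
           (Complex.exp (-(Complex.I * (f x y : ℝ))) * (b12 x y : ℝ) - (b22 x y : ℝ))
              / (((t : ℂ) + 1) * ((Real.sin (f x y) : ℝ) : ℂ))
              + (Δm / ((t : ℂ) + 1)) * Complex.exp (-(Complex.I * (f x y : ℝ))),
            0]) x y = 0 := by
  intro sq hsq Δp Δm hΔp hΔm x y
  have ht1 : (t : ℂ) + 1 ≠ 0 := by
    intro h; apply ht
    have : (t : ℂ) = -1 := by linear_combination h
    exact_mod_cast this
  have hS : ((Real.sin (f x y) : ℝ) : ℂ) ≠ 0 := Complex.ofReal_ne_zero.mpr (hs x y)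
  have htS : ((t : ℂ) + 1) * ((Real.sin (f x y) : ℝ) : ℂ) ≠ 0 := mul_ne_zero ht1 hS
  -- real HasDerivAt facts
  have hfy : HasDerivAt (fun s => f x s) (py f x y) y := hasDerivAt_py f hf x y
  have hfx : HasDerivAt (fun s => f s y) (px f x y) x := hasDerivAt_px f hf x y
  have h11y : HasDerivAt (fun s => b11 x s) (py b11 x y) y := hasDerivAt_py b11 h11 x y
  have h12y : HasDerivAt (fun s => b12 x s) (py b12 x y) y := hasDerivAt_py b12 h12 x y
  have h12x : HasDerivAt (fun s => b12 s y) (px b12 x y) x := hasDerivAt_px b12 h12 x y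
  have h22x : HasDerivAt (fun s => b22 s y) (px b22 x y) x := hasDerivAt_px b22 h22 x y
  have hfxy : HasDerivAt (fun s => px f x s) (py (px f) x y) y :=
    hasDerivAt_py (px f) (smooth2_px f hf) x y
  -- complex building blocks, y-direction
  have cfy : HasDerivAt (fun s => ((f x s : ℝ) : ℂ)) ((py f x y : ℝ) : ℂ) y := hfy.ofReal_comp
  have cb11y : HasDerivAt (fun s => ((b11 x s : ℝ) : ℂ)) ((py b11 x y : ℝ) : ℂ) y := h11y.ofReal_comp
  have cb12y : HasDerivAt (fun s => ((b12 x s : ℝ) : ℂ)) ((py b12 x y : ℝ) : ℂ) y := h12y.ofReal_comp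
  have csiny : HasDerivAt (fun s => ((Real.sin (f x s) : ℝ) : ℂ))
      ((Real.cos (f x y) * py f x y : ℝ) : ℂ) y :=
    ((Real.hasDerivAt_sin (f x y)).comp y hfy).ofReal_comp
  have cEy : HasDerivAt (fun s => Complex.exp (Complex.I * ((f x s : ℝ) : ℂ)))
      (Complex.exp (Complex.I * ((f x y : ℝ) : ℂ)) * (Complex.I * ((py f x y : ℝ) : ℂ))) y :=
    (cfy.const_mul Complex.I).cexp
  have cE'y : HasDerivAt (fun s => Complex.exp (-(Complex.I * ((f x s : ℝ) : ℂ))))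
      (Complex.exp (-(Complex.I * ((f x y : ℝ) : ℂ))) * (-(Complex.I * ((py f x y : ℝ) : ℂ)))) y :=
    (cfy.const_mul Complex.I).neg.cexp
  -- complex building blocks, x-direction
  have cfx : HasDerivAt (fun s => ((f s y : ℝ) : ℂ)) ((px f x y : ℝ) : ℂ) x := hfx.ofReal_comp
  have cb12x : HasDerivAt (fun s => ((b12 s y : ℝ) : ℂ)) ((px b12 x y : ℝ) : ℂ) x := h12x.ofReal_comp
  have cb22x : HasDerivAt (fun s => ((b22 s y : ℝ) : ℂ)) ((px b22 x y : ℝ) : ℂ) x := h22x.ofReal_comp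
  have csinx : HasDerivAt (fun s => ((Real.sin (f s y) : ℝ) : ℂ))
      ((Real.cos (f x y) * px f x y : ℝ) : ℂ) x :=
    hfx.sin.ofReal_comp
  have cEx : HasDerivAt (fun s => Complex.exp (Complex.I * ((f s y : ℝ) : ℂ)))
      (Complex.exp (Complex.I * ((f x y : ℝ) : ℂ)) * (Complex.I * ((px f x y : ℝ) : ℂ))) x :=
    (cfx.const_mul Complex.I).cexp
  have cE'x : HasDerivAt (fun s => Complex.exp (-(Complex.I * ((f s y : ℝ) : ℂ))))
      (Complex.exp (-(Complex.I * ((f x y : ℝ) : ℂ))) * (-(Complex.I * ((px f x y : ℝ) : ℂ)))) x :=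
    (cfx.const_mul Complex.I).neg.cexp
  -- entry derivatives
  have hA00 : HasDerivAt (fun s => Complex.I / 2 * ((px f x s : ℝ) : ℂ))
      (Complex.I / 2 * ((py (px f) x y : ℝ) : ℂ)) y := (hfxy.ofReal_comp).const_mul _
  have hA11 : HasDerivAt (fun s => Complex.I / 2 * (-((px f x s : ℝ) : ℂ)))
      (Complex.I / 2 * (-((py (px f) x y : ℝ) : ℂ))) y := (hfxy.ofReal_comp).neg.const_mul _
  have hA01 : HasDerivAt (fun s => Complex.I / 2 *
      ((Complex.exp (Complex.I * ((f x s : ℝ) : ℂ)) * ((b11 x s : ℝ) : ℂ) - ((b12 x s : ℝ) : ℂ))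
        / ((Real.sin (f x s) : ℝ) : ℂ) - Δp))
      (Complex.I / 2 *
        (((Complex.exp (Complex.I * ((f x y : ℝ) : ℂ)) * (Complex.I * ((py f x y : ℝ) : ℂ))
            * ((b11 x y : ℝ) : ℂ)
          + Complex.exp (Complex.I * ((f x y : ℝ) : ℂ)) * ((py b11 x y : ℝ) : ℂ)
          - ((py b12 x y : ℝ) : ℂ)) * ((Real.sin (f x y) : ℝ) : ℂ)
          - (Complex.exp (Complex.I * ((f x y : ℝ) : ℂ)) * ((b11 x y : ℝ) : ℂ)
             - ((b12 x y : ℝ) : ℂ)) * ((Real.cos (f x y) * py f x y : ℝ) : ℂ))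
         / ((Real.sin (f x y) : ℝ) : ℂ) ^ 2)) y :=
    (((((cEy.mul cb11y).sub cb12y).div csiny hS).sub_const Δp).const_mul _)
  have hA10 : HasDerivAt (fun s => Complex.I / 2 *
      ((Complex.exp (-(Complex.I * ((f x s : ℝ) : ℂ))) * ((b11 x s : ℝ) : ℂ) - ((b12 x s : ℝ) : ℂ))
        / (((t : ℂ) + 1) * ((Real.sin (f x s) : ℝ) : ℂ)) - Δp / ((t : ℂ) + 1)))
      (Complex.I / 2 *
        (((Complex.exp (-(Complex.I * ((f x y : ℝ) : ℂ))) * (-(Complex.I * ((py f x y : ℝ) : ℂ)))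
            * ((b11 x y : ℝ) : ℂ)
          + Complex.exp (-(Complex.I * ((f x y : ℝ) : ℂ))) * ((py b11 x y : ℝ) : ℂ)
          - ((py b12 x y : ℝ) : ℂ)) * (((t : ℂ) + 1) * ((Real.sin (f x y) : ℝ) : ℂ))
          - (Complex.exp (-(Complex.I * ((f x y : ℝ) : ℂ))) * ((b11 x y : ℝ) : ℂ)
             - ((b12 x y : ℝ) : ℂ)) * (((t : ℂ) + 1) * ((Real.cos (f x y) * py f x y : ℝ) : ℂ)))
         / (((t : ℂ) + 1) * ((Real.sin (f x y) : ℝ) : ℂ)) ^ 2)) y :=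
    (((((cE'y.mul cb11y).sub cb12y).div (csiny.const_mul _) htS).sub_const _).const_mul _)
  have hB01 : HasDerivAt (fun s => Complex.I / 2 *
      ((Complex.exp (Complex.I * ((f s y : ℝ) : ℂ)) * ((b12 s y : ℝ) : ℂ) - ((b22 s y : ℝ) : ℂ))
        / ((Real.sin (f s y) : ℝ) : ℂ) + Δm * Complex.exp (Complex.I * ((f s y : ℝ) : ℂ))))
      (Complex.I / 2 *
        (((Complex.exp (Complex.I * ((f x y : ℝ) : ℂ)) * (Complex.I * ((px f x y : ℝ) : ℂ))
            * ((b12 x y : ℝ) : ℂ)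
          + Complex.exp (Complex.I * ((f x y : ℝ) : ℂ)) * ((px b12 x y : ℝ) : ℂ)
          - ((px b22 x y : ℝ) : ℂ)) * ((Real.sin (f x y) : ℝ) : ℂ)
          - (Complex.exp (Complex.I * ((f x y : ℝ) : ℂ)) * ((b12 x y : ℝ) : ℂ)
             - ((b22 x y : ℝ) : ℂ)) * ((Real.cos (f x y) * px f x y : ℝ) : ℂ))
         / ((Real.sin (f x y) : ℝ) : ℂ) ^ 2
         + Δm * (Complex.exp (Complex.I * ((f x y : ℝ) : ℂ)) * (Complex.I * ((px f x y : ℝ) : ℂ))))) x :=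
    (((((cEx.mul cb12x).sub cb22x).div csinx hS).add (cEx.const_mul Δm)).const_mul _)
  have hB10 : HasDerivAt (fun s => Complex.I / 2 *
      ((Complex.exp (-(Complex.I * ((f s y : ℝ) : ℂ))) * ((b12 s y : ℝ) : ℂ) - ((b22 s y : ℝ) : ℂ))
        / (((t : ℂ) + 1) * ((Real.sin (f s y) : ℝ) : ℂ))
        + (Δm / ((t : ℂ) + 1)) * Complex.exp (-(Complex.I * ((f s y : ℝ) : ℂ)))))
      (Complex.I / 2 *
        (((Complex.exp (-(Complex.I * ((f x y : ℝ) : ℂ))) * (-(Complex.I * ((px f x y : ℝ) : ℂ)))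
            * ((b12 x y : ℝ) : ℂ)
          + Complex.exp (-(Complex.I * ((f x y : ℝ) : ℂ))) * ((px b12 x y : ℝ) : ℂ)
          - ((px b22 x y : ℝ) : ℂ)) * (((t : ℂ) + 1) * ((Real.sin (f x y) : ℝ) : ℂ))
          - (Complex.exp (-(Complex.I * ((f x y : ℝ) : ℂ))) * ((b12 x y : ℝ) : ℂ)
             - ((b22 x y : ℝ) : ℂ)) * (((t : ℂ) + 1) * ((Real.cos (f x y) * px f x y : ℝ) : ℂ)))
         / (((t : ℂ) + 1) * ((Real.sin (f x y) : ℝ) : ℂ)) ^ 2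
         + (Δm / ((t : ℂ) + 1)) *
           (Complex.exp (-(Complex.I * ((f x y : ℝ) : ℂ))) * (-(Complex.I * ((px f x y : ℝ) : ℂ)))))) x :=
    (((((cE'x.mul cb12x).sub cb22x).div (csinx.const_mul _) htS).add
      ((cE'x.const_mul (Δm / ((t : ℂ) + 1))))).const_mul _)
  subst hΔp hΔm
  have hexp : Complex.exp (Complex.I * ((f x y : ℝ):ℂ))
      = ((Real.cos (f x y) :ℝ):ℂ) + ((Real.sin (f x y):ℝ):ℂ) * Complex.I := by
    rw [mul_comm, Complex.exp_mul_I, ← Complex.ofReal_cos, ← Complex.ofReal_sin]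
  have hexp' : Complex.exp (-(Complex.I * ((f x y : ℝ):ℂ)))
      = ((Real.cos (f x y) :ℝ):ℂ) - ((Real.sin (f x y):ℝ):ℂ) * Complex.I := by
    rw [show -(Complex.I * ((f x y:ℝ):ℂ)) = ((-(f x y) : ℝ):ℂ) * Complex.I by push_cast; ring,
      Complex.exp_mul_I, ← Complex.ofReal_cos, ← Complex.ofReal_sin, Real.cos_neg, Real.sin_neg]
    push_cast; ring
  obtain ⟨e1, e2, e3⟩ := hgmc x y
  have g1 : ((py (px f) x y : ℝ):ℂ) * ((Real.sin (f x y):ℝ):ℂ)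
      = ((b12 x y :ℝ):ℂ)^2 - ((b11 x y:ℝ):ℂ) * ((b22 x y:ℝ):ℂ) := by
    have : py (px f) x y * Real.sin (f x y) = b12 x y ^ 2 - b11 x y * b22 x y := by
      rw [e1]; field_simp [hs x y]
    exact_mod_cast this
  have g2 : ((py b11 x y : ℝ):ℂ) * ((Real.sin (f x y):ℝ):ℂ)
      = ((px b12 x y :ℝ):ℂ) * ((Real.sin (f x y):ℝ):ℂ)
        + (((b22 x y:ℝ):ℂ) - ((b12 x y:ℝ):ℂ) * ((Real.cos (f x y):ℝ):ℂ)) * ((px f x y:ℝ):ℂ) := by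
    have : py b11 x y * Real.sin (f x y) = px b12 x y * Real.sin (f x y)
        + (b22 x y - b12 x y * Real.cos (f x y)) * px f x y := by
      rw [e2]; field_simp [hs x y]
    exact_mod_cast this
  have g3 : ((py b12 x y : ℝ):ℂ) * ((Real.sin (f x y):ℝ):ℂ)
      = ((px b22 x y :ℝ):ℂ) * ((Real.sin (f x y):ℝ):ℂ)
        - (((b11 x y:ℝ):ℂ) - ((b12 x y:ℝ):ℂ) * ((Real.cos (f x y):ℝ):ℂ)) * ((py f x y:ℝ):ℂ) := by
    have : py b12 x y * Real.sin (f x y) = px b22 x y * Real.sin (f x y)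
        - (b11 x y - b12 x y * Real.cos (f x y)) * py f x y := by
      rw [e3]; field_simp [hs x y]
    exact_mod_cast this
  have g4 : ((b11 x y:ℝ):ℂ) * ((b22 x y:ℝ):ℂ) - ((b12 x y:ℝ):ℂ)^2
      + 2 * (κ:ℂ) * ((b12 x y:ℝ):ℂ) * ((Real.sin (f x y):ℝ):ℂ)
      - (lam:ℂ) * ((Real.sin (f x y):ℝ):ℂ)^2 = 0 := by
    have h := hcon x y
    field_simp [hs x y] at h
    have h2 : (((b11 x y * b22 x y - b12 x y ^ 2) * Real.sin (f x y)
        + 2 * κ * b12 x y * Real.sin (f x y) ^ 2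
        - Real.sin (f x y) ^ 2 * Real.sin (f x y) * lam : ℝ)) = 0 := by linear_combination Real.sin (f x y) * h
    have h3 : ((((b11 x y:ℝ):ℂ) * ((b22 x y:ℝ):ℂ) - ((b12 x y:ℝ):ℂ) ^ 2) * ((Real.sin (f x y):ℝ):ℂ)
        + 2 * (κ:ℂ) * ((b12 x y:ℝ):ℂ) * ((Real.sin (f x y):ℝ):ℂ) ^ 2
        - ((Real.sin (f x y):ℝ):ℂ) ^ 2 * ((Real.sin (f x y):ℝ):ℂ) * (lam:ℂ)) = 0 := by
      exact_mod_cast h2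
    have h4 : ((Real.sin (f x y):ℝ):ℂ) * (((b11 x y:ℝ):ℂ) * ((b22 x y:ℝ):ℂ) - ((b12 x y:ℝ):ℂ)^2
        + 2 * (κ:ℂ) * ((b12 x y:ℝ):ℂ) * ((Real.sin (f x y):ℝ):ℂ)
        - (lam:ℂ) * ((Real.sin (f x y):ℝ):ℂ)^2) = 0 := by linear_combination h3
    exact (mul_eq_zero.mp h4).resolve_left hS
  have g5 : ((Real.sin (f x y):ℝ):ℂ)^2 + ((Real.cos (f x y):ℝ):ℂ)^2 = 1 := by
    have := Real.sin_sq_add_cos_sq (f x y)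
    exact_mod_cast this
  have hSc : Complex.sin ((f x y : ℝ):ℂ) ≠ 0 := by rw [← Complex.ofReal_sin]; exact hS
  push_cast at g1 g2 g3 g4 g5
  have hI : Complex.I * Complex.I = -1 := Complex.I_mul_I
  have hv : Complex.sin ((f x y : ℝ):ℂ) * (Complex.sin ((f x y : ℝ):ℂ))⁻¹ = 1 :=
    mul_inv_cancel₀ hSc
  have hu : (((t : ℝ):ℂ) + 1) * (((t : ℝ):ℂ) + 1)⁻¹ = 1 := mul_inv_cancel₀ ht1
  ext i j
  fin_cases i <;> fin_cases j <;>
    simp only [curv, pdy, pdx, Matrix.sub_apply, Matrix.add_apply, Matrix.mul_apply,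
      Fin.sum_univ_two, Matrix.of_apply, Matrix.smul_apply, smul_eq_mul,
      Matrix.cons_val', Matrix.cons_val_zero, Matrix.cons_val_one, Matrix.head_cons,
      Matrix.head_fin_const, Matrix.empty_val', Matrix.cons_val_fin_one, Matrix.zero_apply,
      mul_zero, zero_mul, add_zero, zero_add, Fin.mk_zero, Fin.mk_one]
  · simp only [deriv_const']
    rw [hA00.deriv, hexp, hexp']; push_cast; simp only [div_eq_mul_inv, mul_pow, mul_inv, ← inv_pow]; 
    linear_combination (((1 : ℂ)/2) * Complex.I * (Complex.sin ((f x y : ℝ) : ℂ))⁻¹) * g1 + (((-1 : ℂ)/2) * Complex.I * (Complex.sin ((f x y : ℝ) : ℂ))⁻¹ ^ 2 * (((t : ℝ) : ℂ) + 1)⁻¹ * ((t : ℝ) : ℂ) * Complex.sin ((f x y : ℝ) : ℂ)) * g4 + (((1 : ℂ)/2) * Complex.I * (((t : ℝ) : ℂ) + 1)⁻¹ * Complex.sin ((f x y : ℝ) : ℂ)) * hsq + (((1 : ℂ)/2) * Complex.I * (((t : ℝ) : ℂ) + 1)⁻¹ * ((κ : ℝ) : ℂ) ^ 2 * ((t :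 ℝ) : ℂ) ^ 2 * Complex.sin ((f x y : ℝ) : ℂ) + Complex.I * (Complex.sin ((f x y : ℝ) : ℂ))⁻¹ * (((t : ℝ) : ℂ) + 1)⁻¹ * ((b12 x y : ℝ) : ℂ) * ((κ : ℝ) : ℂ) * ((t : ℝ) : ℂ) * Complex.sin ((f x y : ℝ) : ℂ) + ((1 : ℂ)/2) * Complex.I * (Complex.sin ((f x y : ℝ) : ℂ))⁻¹ ^ 2 * (((t : ℝ) : ℂ) + 1)⁻¹ * ((b12 x y : ℝ) : ℂ) ^ 2 * Complex.sin ((f x y : ℝ) : ℂ) + ((-1 : ℂ)/2) * Complex.I * (Complex.sin ((f x y : ℝ) : ℂ))⁻¹ ^ 2 * (((t : ℝ) : ℂ) + 1)⁻¹ * ((b11 x y : ℝ) : ℂ) * ((b22 x y : ℝ) : ℂ) * Complex.sin ((f x y : ℝ) : ℂ) + ((-1 : ℂ)/2) * Complex.I * sq ^ 2 * (((t : ℝ) : ℂ) + 1)⁻¹ * Complex.sin ((f x y : ℝ) : ℂ)) * hI + (Complex.I * (Complex.sin ((f x y : ℝ) : ℂ))⁻¹ * (((t : ℝ) : ℂ)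 + 1)⁻¹ * ((b12 x y : ℝ) : ℂ) * ((κ : ℝ) : ℂ) * ((t : ℝ) : ℂ) * Complex.sin ((f x y : ℝ) : ℂ) + ((-1 : ℂ)/2) * Complex.I * (Complex.sin ((f x y : ℝ) : ℂ))⁻¹ * (((t : ℝ) : ℂ) + 1)⁻¹ * ((b12 x y : ℝ) : ℂ) ^ 2 + ((-1 : ℂ)/2) * Complex.I * (Complex.sin ((f x y : ℝ) : ℂ))⁻¹ * (((t : ℝ) : ℂ) + 1)⁻¹ * ((b12 x y : ℝ) : ℂ) ^ 2 * ((t : ℝ) : ℂ) + ((1 : ℂ)/2) * Complex.I * (Complex.sin ((f x y : ℝ) : ℂ))⁻¹ * (((t : ℝ) : ℂ) + 1)⁻¹ * ((b11 x y : ℝ) : ℂ) * ((b22 x y : ℝ) : ℂ) + ((1 : ℂ)/2) * Complex.I * (Complex.sin ((f x y : ℝ) : ℂ))⁻¹ * (((t : ℝ) : ℂ) + 1)⁻¹ * ((b11 x y : ℝ) : ℂ) * ((b22 x y : ℝ) : ℂ) * ((t : ℝ) : ℂ) + ((-1 : ℂ)/2) * Complex.I * (lam : ℂ) * (((t : ℝ)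 : ℂ) + 1)⁻¹ * ((t : ℝ) : ℂ) * Complex.sin ((f x y : ℝ) : ℂ) + ((-1 : ℂ)/2) * Complex.I * (lam : ℂ) * (Complex.sin ((f x y : ℝ) : ℂ))⁻¹ * (((t : ℝ) : ℂ) + 1)⁻¹ * ((t : ℝ) : ℂ) * Complex.sin ((f x y : ℝ) : ℂ) ^ 2 + ((-1 : ℂ)/2) * Complex.I * ((py (px f) x y : ℝ) : ℂ)) * hv + (((-1 : ℂ)/2) * Complex.I * (Complex.sin ((f x y : ℝ) : ℂ))⁻¹ * ((b12 x y : ℝ) : ℂ) ^ 2 + ((1 : ℂ)/2) * Complex.I * (Complex.sin ((f x y : ℝ) : ℂ))⁻¹ * ((b11 x y : ℝ) : ℂ) * ((b22 x y : ℝ) : ℂ)) * hu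
  · rw [hA01.deriv, hB01.deriv, hexp]; push_cast; simp only [div_eq_mul_inv, mul_pow, mul_inv, ← inv_pow]; 
    linear_combination (((-1 : ℂ)/2) * (Complex.sin ((f x y : ℝ) : ℂ))⁻¹ + ((1 : ℂ)/2) * Complex.I * Complex.cos ((f x y : ℝ) : ℂ) * (Complex.sin ((f x y : ℝ) : ℂ))⁻¹ ^ 2) * g2 + (((-1 : ℂ)/2) * Complex.I * (Complex.sin ((f x y : ℝ) : ℂ))⁻¹ ^ 2) * g3 + (((-1 : ℂ)/2) * Complex.I * (Complex.sin ((f x y : ℝ) : ℂ))⁻¹ ^ 2 * ((py f x y : ℝ) : ℂ) * ((b11 x y : ℝ) : ℂ)) * g5 + (((-1 : ℂ)/2) * (Complex.sin ((f x y : ℝ) : ℂ))⁻¹ * ((px f x y : ℝ) : ℂ) * ((b22 x y : ℝ) : ℂ) + ((-1 : ℂ)/2) * (Complex.sin ((f x y : ℝ) : ℂ))⁻¹ ^ 2 * ((px b12 x y : ℝ) : ℂ) * Complex.sin ((f x y : ℝ) : ℂ) ^ 2 + ((1 : ℂ)/2) * Complex.cos ((f x y : ℝ) : ℂ) * (Complex.sin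 ((f x y : ℝ) : ℂ))⁻¹ * ((px f x y : ℝ) : ℂ) * ((b12 x y : ℝ) : ℂ) + ((1 : ℂ)/2) * ((py b11 x y : ℝ) : ℂ) * (Complex.sin ((f x y : ℝ) : ℂ))⁻¹ ^ 2 * Complex.sin ((f x y : ℝ) : ℂ) ^ 2 + ((1 : ℂ)/2) * Complex.I * (Complex.sin ((f x y : ℝ) : ℂ))⁻¹ * ((px f x y : ℝ) : ℂ) * ((b12 x y : ℝ) : ℂ) * Complex.sin ((f x y : ℝ) : ℂ) + ((1 : ℂ)/2) * Complex.I * (Complex.sin ((f x y : ℝ) : ℂ))⁻¹ ^ 2 * ((py f x y : ℝ) : ℂ) * ((b11 x y : ℝ) : ℂ) * Complex.sin ((f x y : ℝ) : ℂ) ^ 2 + ((-1 : ℂ)/2) * Complex.I * (Complex.sin ((f x y : ℝ) : ℂ))⁻¹ ^ 2 * ((px f x y : ℝ) : ℂ) * ((b12 x y : ℝ) : ℂ) * Complex.sin ((f x y : ℝ) : ℂ) ^ 2) * hI + (((1 : ℂ)/2) * (Complex.sin ((f x y : ℝ) : ℂ))⁻¹ * ((px b12 x y : ℝ) : ℂ)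 * Complex.sin ((f x y : ℝ) : ℂ) + ((-1 : ℂ)/2) * ((py b11 x y : ℝ) : ℂ) * (Complex.sin ((f x y : ℝ) : ℂ))⁻¹ * Complex.sin ((f x y : ℝ) : ℂ) + ((1 : ℂ)/2) * Complex.I * (Complex.sin ((f x y : ℝ) : ℂ))⁻¹ * ((px f x y : ℝ) : ℂ) * ((b12 x y : ℝ) : ℂ) * Complex.sin ((f x y : ℝ) : ℂ)) * hv
  · rw [hA10.deriv, hB10.deriv, hexp']; push_cast; simp only [div_eq_mul_inv, mul_pow, mul_inv, ← inv_pow]; 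
    linear_combination (((1 : ℂ)/2) * (Complex.sin ((f x y : ℝ) : ℂ))⁻¹ * (((t : ℝ) : ℂ) + 1)⁻¹ ^ 2 + ((1 : ℂ)/2) * (Complex.sin ((f x y : ℝ) : ℂ))⁻¹ * (((t : ℝ) : ℂ) + 1)⁻¹ ^ 2 * ((t : ℝ) : ℂ) + ((1 : ℂ)/2) * Complex.I * Complex.cos ((f x y : ℝ) : ℂ) * (Complex.sin ((f x y : ℝ) : ℂ))⁻¹ ^ 2 * (((t : ℝ) : ℂ) + 1)⁻¹ ^ 2 + ((1 : ℂ)/2) * Complex.I * Complex.cos ((f x y : ℝ) : ℂ) * (Complex.sin ((f x y : ℝ) : ℂ))⁻¹ ^ 2 * (((t : ℝ) : ℂ) + 1)⁻¹ ^ 2 * ((t : ℝ) : ℂ)) * g2 + (((-1 : ℂ)/2) * Complex.I * (Complex.sin ((f x y : ℝ) : ℂ))⁻¹ ^ 2 * (((t : ℝ) : ℂ) + 1)⁻¹ ^ 2 + ((-1 : ℂ)/2) * Complex.I * (Complex.sin ((f x y : ℝ) : ℂ))⁻¹ ^ 2 * (((t : ℝ) : ℂ) + 1)⁻¹ ^ 2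 * ((t : ℝ) : ℂ)) * g3 + (((-1 : ℂ)/2) * Complex.I * (Complex.sin ((f x y : ℝ) : ℂ))⁻¹ ^ 2 * (((t : ℝ) : ℂ) + 1)⁻¹ ^ 2 * ((py f x y : ℝ) : ℂ) * ((b11 x y : ℝ) : ℂ) + ((-1 : ℂ)/2) * Complex.I * (Complex.sin ((f x y : ℝ) : ℂ))⁻¹ ^ 2 * (((t : ℝ) : ℂ) + 1)⁻¹ ^ 2 * ((py f x y : ℝ) : ℂ) * ((b11 x y : ℝ) : ℂ) * ((t : ℝ) : ℂ)) * g5 + (((1 : ℂ)/2) * (Complex.sin ((f x y : ℝ) : ℂ))⁻¹ * (((t : ℝ) : ℂ) + 1)⁻¹ * ((px f x y : ℝ) : ℂ) * ((b22 x y : ℝ) : ℂ) + ((1 : ℂ)/2) * (Complex.sin ((f x y : ℝ) : ℂ))⁻¹ ^ 2 * (((t : ℝ) : ℂ) + 1)⁻¹ ^ 2 * ((px b12 x y : ℝ) : ℂ) * Complex.sin ((f x y : ℝ) : ℂ) ^ 2 + ((1 : ℂ)/2) * (Complex.sin ((f x y : ℝ) : ℂ))⁻¹ ^ 2 * (((t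 : ℝ) : ℂ) + 1)⁻¹ ^ 2 * ((px b12 x y : ℝ) : ℂ) * ((t : ℝ) : ℂ) * Complex.sin ((f x y : ℝ) : ℂ) ^ 2 + ((-1 : ℂ)/2) * Complex.cos ((f x y : ℝ) : ℂ) * (Complex.sin ((f x y : ℝ) : ℂ))⁻¹ * (((t : ℝ) : ℂ) + 1)⁻¹ * ((px f x y : ℝ) : ℂ) * ((b12 x y : ℝ) : ℂ) + ((-1 : ℂ)/2) * ((py b11 x y : ℝ) : ℂ) * (Complex.sin ((f x y : ℝ) : ℂ))⁻¹ ^ 2 * (((t : ℝ) : ℂ) + 1)⁻¹ ^ 2 * Complex.sin ((f x y : ℝ) : ℂ) ^ 2 + ((-1 : ℂ)/2) * ((py b11 x y : ℝ) : ℂ) * (Complex.sin ((f x y : ℝ) : ℂ))⁻¹ ^ 2 * (((t : ℝ) : ℂ) + 1)⁻¹ ^ 2 * ((t : ℝ) : ℂ) * Complex.sin ((f x y : ℝ) : ℂ) ^ 2 + ((1 : ℂ)/2) * Complex.I * (Complex.sin ((f x y : ℝ) : ℂ))⁻¹ * (((t : ℝ) : ℂ) + 1)⁻¹ * ((px f x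 y : ℝ) : ℂ) * ((b12 x y : ℝ) : ℂ) * Complex.sin ((f x y : ℝ) : ℂ) + ((1 : ℂ)/2) * Complex.I * (Complex.sin ((f x y : ℝ) : ℂ))⁻¹ ^ 2 * (((t : ℝ) : ℂ) + 1)⁻¹ ^ 2 * ((py f x y : ℝ) : ℂ) * ((b11 x y : ℝ) : ℂ) * Complex.sin ((f x y : ℝ) : ℂ) ^ 2 + ((1 : ℂ)/2) * Complex.I * (Complex.sin ((f x y : ℝ) : ℂ))⁻¹ ^ 2 * (((t : ℝ) : ℂ) + 1)⁻¹ ^ 2 * ((py f x y : ℝ) : ℂ) * ((b11 x y : ℝ) : ℂ) * ((t : ℝ) : ℂ) * Complex.sin ((f x y : ℝ) : ℂ) ^ 2 + ((-1 : ℂ)/2) * Complex.I * (Complex.sin ((f x y : ℝ) : ℂ))⁻¹ ^ 2 * (((t : ℝ) : ℂ) + 1)⁻¹ ^ 2 * ((px f x y : ℝ) : ℂ) * ((b12 x y : ℝ) : ℂ) * Complex.sin ((f x y : ℝ) : ℂ) ^ 2 + ((-1 : ℂ)/2) * Complex.I * (Complex.sin ((f x y : ℝ) : ℂ))⁻¹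 ^ 2 * (((t : ℝ) : ℂ) + 1)⁻¹ ^ 2 * ((px f x y : ℝ) : ℂ) * ((b12 x y : ℝ) : ℂ) * ((t : ℝ) : ℂ) * Complex.sin ((f x y : ℝ) : ℂ) ^ 2) * hI + (((-1 : ℂ)/2) * (Complex.sin ((f x y : ℝ) : ℂ))⁻¹ * (((t : ℝ) : ℂ) + 1)⁻¹ ^ 2 * ((px b12 x y : ℝ) : ℂ) * Complex.sin ((f x y : ℝ) : ℂ) + ((-1 : ℂ)/2) * (Complex.sin ((f x y : ℝ) : ℂ))⁻¹ * (((t : ℝ) : ℂ) + 1)⁻¹ ^ 2 * ((px b12 x y : ℝ) : ℂ) * ((t : ℝ) : ℂ) * Complex.sin ((f x y : ℝ) : ℂ) + ((1 : ℂ)/2) * ((py b11 x y : ℝ) : ℂ) * (Complex.sin ((f x y : ℝ) : ℂ))⁻¹ * (((t : ℝ) : ℂ) + 1)⁻¹ ^ 2 * Complex.sin ((f x y : ℝ) : ℂ) + ((1 : ℂ)/2) * ((py b11 x y : ℝ) : ℂ) * (Complex.sin ((f x y : ℝ) : ℂ))⁻¹ * (((t : ℝ) : ℂ) + 1)⁻¹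 ^ 2 * ((t : ℝ) : ℂ) * Complex.sin ((f x y : ℝ) : ℂ) + ((-1 : ℂ)/2) * Complex.I * (((t : ℝ) : ℂ) + 1)⁻¹ * ((px f x y : ℝ) : ℂ) * ((b12 x y : ℝ) : ℂ) + ((1 : ℂ)/2) * Complex.I * (((t : ℝ) : ℂ) + 1)⁻¹ ^ 2 * ((px f x y : ℝ) : ℂ) * ((b12 x y : ℝ) : ℂ) + ((1 : ℂ)/2) * Complex.I * (((t : ℝ) : ℂ) + 1)⁻¹ ^ 2 * ((px f x y : ℝ) : ℂ) * ((b12 x y : ℝ) : ℂ) * ((t : ℝ) : ℂ) + ((1 : ℂ)/2) * Complex.I * (Complex.sin ((f x y : ℝ) : ℂ))⁻¹ * (((t : ℝ) : ℂ) + 1)⁻¹ ^ 2 * ((px f x y : ℝ) : ℂ) * ((b12 x y : ℝ) : ℂ) * Complex.sin ((f x y : ℝ) : ℂ) + ((1 : ℂ)/2) * Complex.I * (Complex.sin ((f x y : ℝ) : ℂ))⁻¹ * (((t : ℝ) : ℂ) + 1)⁻¹ ^ 2 * ((px f x y : ℝ) : ℂ) * ((b12 x y : ℝ) : ℂ) *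 ((t : ℝ) : ℂ) * Complex.sin ((f x y : ℝ) : ℂ)) * hv + (((1 : ℂ)/2) * (Complex.sin ((f x y : ℝ) : ℂ))⁻¹ * (((t : ℝ) : ℂ) + 1)⁻¹ * ((px f x y : ℝ) : ℂ) * ((b22 x y : ℝ) : ℂ) + ((-1 : ℂ)/2) * Complex.cos ((f x y : ℝ) : ℂ) * (Complex.sin ((f x y : ℝ) : ℂ))⁻¹ * (((t : ℝ) : ℂ) + 1)⁻¹ * ((px f x y : ℝ) : ℂ) * ((b12 x y : ℝ) : ℂ) + ((1 : ℂ)/2) * Complex.I * (((t : ℝ) : ℂ) + 1)⁻¹ * ((px f x y : ℝ) : ℂ) * ((b12 x y : ℝ) : ℂ)) * hu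
  · simp only [deriv_const']
    rw [hA11.deriv, hexp, hexp']; push_cast; simp only [div_eq_mul_inv, mul_pow, mul_inv, ← inv_pow]; 
    linear_combination (((-1 : ℂ)/2) * Complex.I * (Complex.sin ((f x y : ℝ) : ℂ))⁻¹) * g1 + (((1 : ℂ)/2) * Complex.I * (Complex.sin ((f x y : ℝ) : ℂ))⁻¹ ^ 2 * (((t : ℝ) : ℂ) + 1)⁻¹ * ((t : ℝ) : ℂ) * Complex.sin ((f x y : ℝ) : ℂ)) * g4 + (((-1 : ℂ)/2) * Complex.I * (((t : ℝ) : ℂ) + 1)⁻¹ * Complex.sin ((f x y : ℝ) : ℂ)) * hsq + (((-1 : ℂ)/2) * Complex.I * (((t : ℝ) : ℂ) + 1)⁻¹ * ((κ : ℝ) : ℂ) ^ 2 * ((t : ℝ) : ℂ) ^ 2 * Complex.sin ((f x y : ℝ) : ℂ) + (-1 : ℂ) * Complex.I * (Complex.sin ((f x y : ℝ) : ℂ))⁻¹ * (((t : ℝ) : ℂ) + 1)⁻¹ * ((b12 x y : ℝ) : ℂ) * ((κ : ℝ) : ℂ) * ((t : ℝ) : ℂ) * Complex.sin ((f x y : ℝ)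 : ℂ) + ((-1 : ℂ)/2) * Complex.I * (Complex.sin ((f x y : ℝ) : ℂ))⁻¹ ^ 2 * (((t : ℝ) : ℂ) + 1)⁻¹ * ((b12 x y : ℝ) : ℂ) ^ 2 * Complex.sin ((f x y : ℝ) : ℂ) + ((1 : ℂ)/2) * Complex.I * (Complex.sin ((f x y : ℝ) : ℂ))⁻¹ ^ 2 * (((t : ℝ) : ℂ) + 1)⁻¹ * ((b11 x y : ℝ) : ℂ) * ((b22 x y : ℝ) : ℂ) * Complex.sin ((f x y : ℝ) : ℂ) + ((1 : ℂ)/2) * Complex.I * sq ^ 2 * (((t : ℝ) : ℂ) + 1)⁻¹ * Complex.sin ((f x y : ℝ) : ℂ)) * hI + ((-1 : ℂ) * Complex.I * (Complex.sin ((f x y : ℝ) : ℂ))⁻¹ * (((t : ℝ) : ℂ) + 1)⁻¹ * ((b12 x y : ℝ) : ℂ) * ((κ : ℝ) : ℂ) * ((t : ℝ) : ℂ) * Complex.sin ((f x y : ℝ) : ℂ) + ((1 : ℂ)/2) * Complex.I * (Complex.sin ((f x y : ℝ) : ℂ))⁻¹ * (((t : ℝ) : ℂ) + 1)⁻¹ *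 ((b12 x y : ℝ) : ℂ) ^ 2 + ((1 : ℂ)/2) * Complex.I * (Complex.sin ((f x y : ℝ) : ℂ))⁻¹ * (((t : ℝ) : ℂ) + 1)⁻¹ * ((b12 x y : ℝ) : ℂ) ^ 2 * ((t : ℝ) : ℂ) + ((-1 : ℂ)/2) * Complex.I * (Complex.sin ((f x y : ℝ) : ℂ))⁻¹ * (((t : ℝ) : ℂ) + 1)⁻¹ * ((b11 x y : ℝ) : ℂ) * ((b22 x y : ℝ) : ℂ) + ((-1 : ℂ)/2) * Complex.I * (Complex.sin ((f x y : ℝ) : ℂ))⁻¹ * (((t : ℝ) : ℂ) + 1)⁻¹ * ((b11 x y : ℝ) : ℂ) * ((b22 x y : ℝ) : ℂ) * ((t : ℝ) : ℂ) + ((1 : ℂ)/2) * Complex.I * (lam : ℂ) * (((t : ℝ) : ℂ) + 1)⁻¹ * ((t : ℝ) : ℂ) * Complex.sin ((f x y : ℝ) : ℂ) + ((1 : ℂ)/2) * Complex.I * (lam : ℂ) * (Complex.sin ((f x y : ℝ) : ℂ))⁻¹ * (((t : ℝ) : ℂ) + 1)⁻¹ * ((t : ℝ) : ℂ) * Complex.sin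 ((f x y : ℝ) : ℂ) ^ 2 + ((1 : ℂ)/2) * Complex.I * ((py (px f) x y : ℝ) : ℂ)) * hv + (((1 : ℂ)/2) * Complex.I * (Complex.sin ((f x y : ℝ) : ℂ))⁻¹ * ((b12 x y : ℝ) : ℂ) ^ 2 + ((-1 : ℂ)/2) * Complex.I * (Complex.sin ((f x y : ℝ) : ℂ))⁻¹ * ((b11 x y : ℝ) : ℂ) * ((b22 x y : ℝ) : ℂ)) * hu
end
end

section
/- Let Y1(y), Y2(y) be smooth functions with Y1 nowhere zero, t \ne -1. Suppose f, b11, b12, b22 satisfy the GMC equations in Tchebycheff coordinates (sin f \ne 0) and the constraint K sin^2 f - Y1 b11 + (Y1 cos f + Y2 sin f) b12 = 0, where K = (b11 b22 - b12^2)/sin^2 f. Then A = (i/2)[[f_x, (e^{if} b11 - b12)/sin f],[ (e^{-if} b11 - b12)/((t+1) sin f), -f_x]] and B = (i/2)[[0, (e^{if} b12 - b22)/sin f + (i Y1 + Y2) t e^{if}],[ (e^{-if} b12 - b22)/((t+1) sin f) - ((i Y1 - Y2) t/(t+1)) e^{-if}, 0]] satisfy A_y - B_x + [A,B] = 0. 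-/
open Matrix

noncomputable section

lemma sliceX {u : ℝ → ℝ → ℝ} (hu : Smooth2 u) (x y : ℝ) :
    HasDerivAt (fun s => u s y) (px u x y) x := by
  have h : DifferentiableAt ℝ (fun s : ℝ => u s y) x :=
    (hu.differentiable (by simp) (x, y)).comp (g := fun p : ℝ × ℝ => u p.1 p.2) x
      (differentiableAt_fun_id.prodMk (differentiableAt_const y) : DifferentiableAt ℝ (fun s : ℝ => (s, y)) x)
  exact h.hasDerivAt

lemma sliceY {u : ℝ → ℝ → ℝ} (hu : Smooth2 u) (x y : ℝ) :
    HasDerivAt (fun s => u x s) (py u x y) y := by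
  have h : DifferentiableAt ℝ (fun s : ℝ => u x s) y :=
    (hu.differentiable (by simp) (x, y)).comp y
      ((differentiableAt_const _).prodMk differentiableAt_id)
  exact h.hasDerivAt

lemma smooth_px {u : ℝ → ℝ → ℝ} (hu : Smooth2 u) : Smooth2 (px u) := by
  have h2 : ∀ p : ℝ × ℝ, px u p.1 p.2
      = fderiv ℝ (fun q : ℝ × ℝ => u q.1 q.2) p (1, 0) := by
    intro p
    have hF := ((hu.differentiable (by simp)) p).hasFDerivAt
    have hline : HasDerivAt (fun s : ℝ => ((s, p.2) : ℝ × ℝ)) ((1 : ℝ), (0 : ℝ)) p.1 :=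
      (hasDerivAt_id p.1).prodMk (hasDerivAt_const p.1 p.2)
    have := hF.comp_hasDerivAt p.1 hline
    have h3 : (fun s : ℝ => u s p.2) = (fun q : ℝ × ℝ => u q.1 q.2) ∘ fun s : ℝ => ((s, p.2) : ℝ × ℝ) := rfl
    show deriv (fun s : ℝ => u s p.2) p.1 = _
    rw [h3]
    exact this.deriv
  have h1 : ContDiff ℝ (⊤ : ℕ∞) (fun p : ℝ × ℝ => fderiv ℝ (fun q : ℝ × ℝ => u q.1 q.2) p (1, 0)) :=
    (hu.fderiv_right (by simp)).clm_apply contDiff_const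
  unfold Smooth2
  have : (fun p : ℝ × ℝ => px u p.1 p.2)
      = fun p : ℝ × ℝ => fderiv ℝ (fun q : ℝ × ℝ => u q.1 q.2) p (1, 0) :=
    funext fun p => h2 p
  rw [this]; exact h1

set_option maxHeartbeats 4000000

/-- Case 3a, Tchebycheff: ZCR for the class
`K sin²f - Y1 b11 + (Y1 cos f + Y2 sin f) b12 = 0`. -/
theorem zcr_tcheb_case3a (Y1 Y2 : ℝ → ℝ)
    (hY1 : ContDiff ℝ (⊤ : ℕ∞) Y1) (hY2 : ContDiff ℝ (⊤ : ℕ∞) Y2)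
    (hY1ne : ∀ y, Y1 y ≠ 0) (t : ℝ) (ht : t ≠ -1)
    (f b11 b12 b22 : ℝ → ℝ → ℝ)
    (hf : Smooth2 f) (h11 : Smooth2 b11) (h12 : Smooth2 b12) (h22 : Smooth2 b22)
    (hs : ∀ x y, Real.sin (f x y) ≠ 0)
    (hgmc : GMCT f b11 b12 b22)
    (hcon : ∀ x y, ((b11 x y * b22 x y - b12 x y ^ 2) / Real.sin (f x y) ^ 2)
        * Real.sin (f x y) ^ 2 - Y1 y * b11 x y
        + (Y1 y * Real.cos (f x y) + Y2 y * Real.sin (f x y)) * b12 x y = 0) :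
    ∀ x y, curv
      (fun x y => (Complex.I / 2) •
        !![((px f x y : ℝ) : ℂ),
            (Complex.exp (Complex.I * (f x y : ℝ)) * (b11 x y : ℝ) - (b12 x y : ℝ))
              / ((Real.sin (f x y) : ℝ) : ℂ);
           (Complex.exp (-(Complex.I * (f x y : ℝ))) * (b11 x y : ℝ) - (b12 x y : ℝ))
              / (((t : ℂ) + 1) * ((Real.sin (f x y) : ℝ) : ℂ)),
            -((px f x y : ℝ) : ℂ)])
      (fun x y => (Complex.I / 2) •
        !![0,
            (Complex.exp (Complex.I * (f x y : ℝ)) * (b12 x y : ℝ) - (b22 x y : ℝ))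
              / ((Real.sin (f x y) : ℝ) : ℂ)
              + (Complex.I * (Y1 y : ℝ) + (Y2 y : ℝ)) * (t : ℂ)
                * Complex.exp (Complex.I * (f x y : ℝ));
           (Complex.exp (-(Complex.I * (f x y : ℝ))) * (b12 x y : ℝ) - (b22 x y : ℝ))
              / (((t : ℂ) + 1) * ((Real.sin (f x y) : ℝ) : ℂ))
              - ((Complex.I * (Y1 y : ℝ) - (Y2 y : ℝ)) * (t : ℂ) / ((t : ℂ) + 1))
                * Complex.exp (-(Complex.I * (f x y : ℝ))),
            0]) x y = 0 := by
  intro x y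
  obtain ⟨hG, hC1, hC2⟩ := hgmc x y
  have hsC : ((Real.sin (f x y) : ℝ) : ℂ) ≠ 0 := Complex.ofReal_ne_zero.mpr (hs x y)
  have htR : (t : ℝ) + 1 ≠ 0 := fun h => ht (by linarith)
  have htC : ((t : ℂ) + 1) ≠ 0 := by exact_mod_cast (Complex.ofReal_ne_zero.mpr htR)
  have hfY := sliceY hf x y
  have hfXx := sliceX hf x y
  have cfY : HasDerivAt (fun s : ℝ => ((f x s : ℝ) : ℂ)) ((py f x y : ℝ) : ℂ) y := hfY.ofReal_comp
  have cfX : HasDerivAt (fun s : ℝ => ((f s y : ℝ) : ℂ)) ((px f x y : ℝ) : ℂ) x := hfXx.ofReal_comp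
  have cfXY : HasDerivAt (fun s : ℝ => ((px f x s : ℝ) : ℂ)) ((py (px f) x y : ℝ) : ℂ) y :=
    (sliceY (smooth_px hf) x y).ofReal_comp
  have cb11Y : HasDerivAt (fun s : ℝ => ((b11 x s : ℝ) : ℂ)) ((py b11 x y : ℝ) : ℂ) y :=
    (sliceY h11 x y).ofReal_comp
  have cb12Y : HasDerivAt (fun s : ℝ => ((b12 x s : ℝ) : ℂ)) ((py b12 x y : ℝ) : ℂ) y :=
    (sliceY h12 x y).ofReal_comp
  have cb12X : HasDerivAt (fun s : ℝ => ((b12 s y : ℝ) : ℂ)) ((px b12 x y : ℝ) : ℂ) x :=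
    (sliceX h12 x y).ofReal_comp
  have cb22X : HasDerivAt (fun s : ℝ => ((b22 s y : ℝ) : ℂ)) ((px b22 x y : ℝ) : ℂ) x :=
    (sliceX h22 x y).ofReal_comp
  have hEy := (cfY.const_mul Complex.I).cexp
  have hEmy := ((cfY.const_mul Complex.I).fun_neg).cexp
  have hEx := (cfX.const_mul Complex.I).cexp
  have hEmx := ((cfX.const_mul Complex.I).fun_neg).cexp
  have hSy : HasDerivAt (fun s : ℝ => ((Real.sin (f x s) : ℝ) : ℂ))
      ((Real.cos (f x y) * py f x y : ℝ) : ℂ) y := (hfY.sin).ofReal_comp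
  have hSx : HasDerivAt (fun s : ℝ => ((Real.sin (f s y) : ℝ) : ℂ))
      ((Real.cos (f x y) * px f x y : ℝ) : ℂ) x := (hfXx.sin).ofReal_comp
  have hT1 := cfXY.const_mul (Complex.I / 2)
  have hT6 := (cfXY.fun_neg).const_mul (Complex.I / 2)
  have hT2 := (((hEy.fun_mul cb11Y).fun_sub cb12Y).fun_div hSy hsC).const_mul (Complex.I / 2)
  have hT3 := (((hEmy.fun_mul cb11Y).fun_sub cb12Y).fun_div (hSy.const_mul ((t : ℂ) + 1))
      (mul_ne_zero htC hsC)).const_mul (Complex.I / 2)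
  have hT4 := ((((hEx.fun_mul cb12X).fun_sub cb22X).fun_div hSx hsC).fun_add
      (hEx.const_mul ((Complex.I * (Y1 y : ℝ) + (Y2 y : ℝ)) * (t : ℂ)))).const_mul (Complex.I / 2)
  have hT5 := ((((hEmx.fun_mul cb12X).fun_sub cb22X).fun_div (hSx.const_mul ((t : ℂ) + 1))
      (mul_ne_zero htC hsC)).fun_sub
      (hEmx.const_mul ((Complex.I * (Y1 y : ℝ) - (Y2 y : ℝ)) * (t : ℂ) / ((t : ℂ) + 1)))).const_mul
      (Complex.I / 2)
  have hsC2 : Complex.sin ((f x y : ℝ) : ℂ) ≠ 0 := by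
    rw [← Complex.ofReal_sin]; exact hsC
  have hT4' : HasDerivAt (fun s => Complex.I / 2 *
      ((Complex.exp (Complex.I * ((f s y : ℝ) : ℂ)) * ((b12 s y : ℝ) : ℂ) - ((b22 s y : ℝ) : ℂ))
          / ((Real.sin (f s y) : ℝ) : ℂ)
        + (Complex.I * ((Y1 y : ℝ) : ℂ) + ((Y2 y : ℝ) : ℂ)) * (t : ℂ)
          * Complex.exp (Complex.I * ((f s y : ℝ) : ℂ))))
      (Complex.I / 2 *
        (((Complex.exp (Complex.I * ((f x y : ℝ) : ℂ)) * (Complex.I * ((px f x y : ℝ) : ℂ))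
              * ((b12 x y : ℝ) : ℂ)
            + Complex.exp (Complex.I * ((f x y : ℝ) : ℂ)) * ((px b12 x y : ℝ) : ℂ)
            - ((px b22 x y : ℝ) : ℂ)) * ((Real.sin (f x y) : ℝ) : ℂ)
          - (Complex.exp (Complex.I * ((f x y : ℝ) : ℂ)) * ((b12 x y : ℝ) : ℂ)
              - ((b22 x y : ℝ) : ℂ)) * ((Real.cos (f x y) * px f x y : ℝ) : ℂ)
          + (Complex.I * ((Y1 y : ℝ) : ℂ) + ((Y2 y : ℝ) : ℂ)) * (t : ℂ)
              * Complex.exp (Complex.I * ((f x y : ℝ) : ℂ)) * (Complex.I * ((px f x y : ℝ) : ℂ))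
              * ((Real.sin (f x y) : ℝ) : ℂ) ^ 2) / ((Real.sin (f x y) : ℝ) : ℂ) ^ 2)) x :=
    hT4.congr_deriv (by field_simp [hsC2, htC])
  have hT5' : HasDerivAt (fun s => Complex.I / 2 *
      ((Complex.exp (-(Complex.I * ((f s y : ℝ) : ℂ))) * ((b12 s y : ℝ) : ℂ) - ((b22 s y : ℝ) : ℂ))
          / (((t : ℂ) + 1) * ((Real.sin (f s y) : ℝ) : ℂ))
        - (Complex.I * ((Y1 y : ℝ) : ℂ) - ((Y2 y : ℝ) : ℂ)) * (t : ℂ) / ((t : ℂ) + 1)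
          * Complex.exp (-(Complex.I * ((f s y : ℝ) : ℂ)))))
      (Complex.I / 2 *
        (((Complex.exp (-(Complex.I * ((f x y : ℝ) : ℂ))) * -(Complex.I * ((px f x y : ℝ) : ℂ))
              * ((b12 x y : ℝ) : ℂ)
            + Complex.exp (-(Complex.I * ((f x y : ℝ) : ℂ))) * ((px b12 x y : ℝ) : ℂ)
            - ((px b22 x y : ℝ) : ℂ)) * ((Real.sin (f x y) : ℝ) : ℂ)
          - (Complex.exp (-(Complex.I * ((f x y : ℝ) : ℂ))) * ((b12 x y : ℝ) : ℂ)
              - ((b22 x y : ℝ) : ℂ)) * ((Real.cos (f x y) * px f x y : ℝ) : ℂ)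
          - (Complex.I * ((Y1 y : ℝ) : ℂ) - ((Y2 y : ℝ) : ℂ)) * (t : ℂ)
              * Complex.exp (-(Complex.I * ((f x y : ℝ) : ℂ))) * -(Complex.I * ((px f x y : ℝ) : ℂ))
              * ((Real.sin (f x y) : ℝ) : ℂ) ^ 2)
          / (((t : ℂ) + 1) * ((Real.sin (f x y) : ℝ) : ℂ) ^ 2))) x :=
    hT5.congr_deriv (by field_simp [hsC2, htC])
  have hp : (Complex.exp (Complex.I * ((f x y : ℝ) : ℂ)) * ((b12 x y : ℝ) : ℂ) - ((b22 x y : ℝ) : ℂ))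
        / ((Real.sin (f x y) : ℝ) : ℂ)
      + (Complex.I * ((Y1 y : ℝ) : ℂ) + ((Y2 y : ℝ) : ℂ)) * (t : ℂ)
        * Complex.exp (Complex.I * ((f x y : ℝ) : ℂ))
      = (Complex.exp (Complex.I * ((f x y : ℝ) : ℂ)) * ((b12 x y : ℝ) : ℂ) - ((b22 x y : ℝ) : ℂ)
          + (Complex.I * ((Y1 y : ℝ) : ℂ) + ((Y2 y : ℝ) : ℂ)) * (t : ℂ)
            * Complex.exp (Complex.I * ((f x y : ℝ) : ℂ)) * ((Real.sin (f x y) : ℝ) : ℂ))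
        / ((Real.sin (f x y) : ℝ) : ℂ) := by
    field_simp [hsC2, htC]
  have hq : (Complex.exp (-(Complex.I * ((f x y : ℝ) : ℂ))) * ((b12 x y : ℝ) : ℂ) - ((b22 x y : ℝ) : ℂ))
        / (((t : ℂ) + 1) * ((Real.sin (f x y) : ℝ) : ℂ))
      - (Complex.I * ((Y1 y : ℝ) : ℂ) - ((Y2 y : ℝ) : ℂ)) * (t : ℂ) / ((t : ℂ) + 1)
        * Complex.exp (-(Complex.I * ((f x y : ℝ) : ℂ)))
      = (Complex.exp (-(Complex.I * ((f x y : ℝ) : ℂ))) * ((b12 x y : ℝ) : ℂ) - ((b22 x y : ℝ) : ℂ)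
          - (Complex.I * ((Y1 y : ℝ) : ℂ) - ((Y2 y : ℝ) : ℂ)) * (t : ℂ)
            * Complex.exp (-(Complex.I * ((f x y : ℝ) : ℂ))) * ((Real.sin (f x y) : ℝ) : ℂ))
        / (((t : ℂ) + 1) * ((Real.sin (f x y) : ℝ) : ℂ)) := by
    field_simp [hsC2, htC]
  have hEq : Complex.exp (Complex.I * ((f x y : ℝ) : ℂ))
      = ((Real.cos (f x y) : ℝ) : ℂ) + ((Real.sin (f x y) : ℝ) : ℂ) * Complex.I := by
    rw [mul_comm, Complex.exp_mul_I, ← Complex.ofReal_cos, ← Complex.ofReal_sin]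
  have hEmq : Complex.exp (-(Complex.I * ((f x y : ℝ) : ℂ)))
      = ((Real.cos (f x y) : ℝ) : ℂ) - ((Real.sin (f x y) : ℝ) : ℂ) * Complex.I := by
    rw [show -(Complex.I * ((f x y : ℝ) : ℂ)) = ((-(f x y) : ℝ) : ℂ) * Complex.I by
      push_cast; ring]
    rw [Complex.exp_mul_I, ← Complex.ofReal_cos, ← Complex.ofReal_sin, Real.cos_neg, Real.sin_neg]
    push_cast; ring
  have hR0 := hcon x y
  rw [div_mul_cancel₀ _ (pow_ne_zero 2 (hs x y))] at hR0
  have hRC : ((b11 x y : ℝ) : ℂ) * ((b22 x y : ℝ) : ℂ) - ((b12 x y : ℝ) : ℂ) ^ 2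
      - ((Y1 y : ℝ) : ℂ) * ((b11 x y : ℝ) : ℂ)
      + (((Y1 y : ℝ) : ℂ) * ((Real.cos (f x y) : ℝ) : ℂ)
        + ((Y2 y : ℝ) : ℂ) * ((Real.sin (f x y) : ℝ) : ℂ)) * ((b12 x y : ℝ) : ℂ) = 0 := by
    exact_mod_cast congrArg (fun r : ℝ => (r : ℂ)) (by linarith : b11 x y * b22 x y - b12 x y ^ 2
      - Y1 y * b11 x y + (Y1 y * Real.cos (f x y) + Y2 y * Real.sin (f x y)) * b12 x y = 0)
  have hpy : ((Real.cos (f x y) : ℝ) : ℂ) ^ 2 = 1 - ((Real.sin (f x y) : ℝ) : ℂ) ^ 2 := by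
    have h := Real.sin_sq_add_cos_sq (f x y)
    have : Real.cos (f x y) ^ 2 = 1 - Real.sin (f x y) ^ 2 := by linarith
    exact_mod_cast congrArg (fun r : ℝ => (r : ℂ)) this
  have hI : Complex.I ^ 2 = -1 := Complex.I_sq
  have hD1 : (2 * (Complex.sin ((f x y : ℝ) : ℂ) * (((t : ℂ) + 1) * Complex.sin ((f x y : ℝ) : ℂ)) ^ 2)
      * (2 * (((t : ℂ) + 1) * Complex.sin ((f x y : ℝ) : ℂ) ^ 2))) ≠ 0 :=
    mul_ne_zero (mul_ne_zero two_ne_zero (mul_ne_zero hsC2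
      (pow_ne_zero _ (mul_ne_zero htC hsC2))))
      (mul_ne_zero two_ne_zero (mul_ne_zero htC (pow_ne_zero _ hsC2)))
  have hD2 : (2 * (2 * (((t : ℂ) + 1) * Complex.sin ((f x y : ℝ) : ℂ)))
      * (2 * (((t : ℂ) + 1) * Complex.sin ((f x y : ℝ) : ℂ)) * 2)) ≠ 0 :=
    mul_ne_zero (mul_ne_zero two_ne_zero (mul_ne_zero two_ne_zero (mul_ne_zero htC hsC2)))
      (mul_ne_zero (mul_ne_zero two_ne_zero (mul_ne_zero htC hsC2)) two_ne_zero)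
  have hpy2 : Complex.cos ((f x y : ℝ) : ℂ) ^ 2 = 1 - Complex.sin ((f x y : ℝ) : ℂ) ^ 2 := by
    linear_combination Complex.sin_sq_add_cos_sq ((f x y : ℝ) : ℂ)
  rw [Complex.ofReal_cos, Complex.ofReal_sin] at hRC
  ext i j
  fin_cases i <;> fin_cases j <;>
    simp only [curv, pdy, pdx, Matrix.of_apply, Matrix.sub_apply, Matrix.add_apply,
      Matrix.smul_apply, smul_eq_mul, Matrix.mul_apply, Fin.sum_univ_two,
      Matrix.cons_val', Matrix.cons_val_zero, Matrix.cons_val_one, Matrix.head_cons,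
      Matrix.head_fin_const, Matrix.empty_val', Matrix.cons_val_fin_one, Matrix.zero_apply,
      Fin.zero_eta, Fin.mk_one, Fin.isValue, mul_zero, zero_mul, deriv_const', add_zero, zero_add, sub_zero, neg_zero]
  · simp only [hT1.deriv, hT2.deriv, hT3.deriv, hT4'.deriv, hT5'.deriv, hT6.deriv]
    simp only [hp, hq]
    simp only [hG, hC1, hC2]
    simp only [hEq, hEmq]
    push_cast
    field_simp [hsC2, htC]
    linear_combination (norm := ring1) ((-2 : ℂ) * Complex.I * Complex.sin ((f x y : ℝ) : ℂ) * (t : ℂ)) * hRC + ((2 : ℂ) * Complex.I * Complex.sin ((f x y : ℝ) : ℂ) * (t : ℂ) * (Y1 y : ℂ) * (b11 x y : ℂ)) * hpy2 + (Complex.I*(2*(b12 x y : ℂ)*Complex.sin ((f x y : ℝ) : ℂ)*(t : ℂ)*Complex.cos ((f x y : ℝ) : ℂ)*(Y1 y : ℂ) + 2*(b12 x y : ℂ)*Complex.sin ((f x y : ℝ) : ℂ)^2*(t : ℂ)*(Y2 y : ℂ) + 2*(b12 x y : ℂ)^2*Complex.sin ((f x y : ℝ) : ℂ) - 2*(b11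 x y : ℂ)*(b22 x y : ℂ)*Complex.sin ((f x y : ℝ) : ℂ) - 2*(b11 x y : ℂ)*Complex.sin ((f x y : ℝ) : ℂ)*(t : ℂ)*Complex.cos ((f x y : ℝ) : ℂ)^2*(Y1 y : ℂ)) + Complex.I*(Complex.I^2-1)*2*(b11 x y : ℂ)*Complex.sin ((f x y : ℝ) : ℂ)^3*(t : ℂ)*(Y1 y : ℂ)) * hI
  · simp only [hT1.deriv, hT2.deriv, hT3.deriv, hT4'.deriv, hT5'.deriv, hT6.deriv]
    simp only [hp, hq]
    simp only [hG, hC1, hC2]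
    simp only [hEq, hEmq]
    push_cast
    field_simp [hsC2, htC]
    linear_combination (norm := ring1) ((-2 : ℂ) * Complex.I * (py f x y : ℂ) * (b11 x y : ℂ)) * hpy2 + ((2 : ℂ) * Complex.I * Complex.sin ((f x y : ℝ) : ℂ)^2 * (py f x y : ℂ) * (b11 x y : ℂ)) * hI
  · simp only [hT1.deriv, hT2.deriv, hT3.deriv, hT4'.deriv, hT5'.deriv, hT6.deriv]
    simp only [hp, hq]
    simp only [hG, hC1, hC2]
    simp only [hEq, hEmq]
    push_cast
    field_simp [hsC2, htC]
    linear_combination (norm := ring1) ((-2 : ℂ) * Complex.I * (py f x y : ℂ) * (b11 x y : ℂ)) * hpy2 + ((2 : ℂ) * Complex.I * Complex.sin ((f x y : ℝ) : ℂ)^2 * (py f x y : ℂ) * (b11 x y : ℂ)) * hI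
  · simp only [hT1.deriv, hT2.deriv, hT3.deriv, hT4'.deriv, hT5'.deriv, hT6.deriv]
    simp only [hp, hq]
    simp only [hG, hC1, hC2]
    simp only [hEq, hEmq]
    push_cast
    field_simp [hsC2, htC]
    linear_combination (norm := ring1) ((2 : ℂ) * Complex.I * Complex.sin ((f x y : ℝ) : ℂ) * (t : ℂ)) * hRC + ((-2 : ℂ) * Complex.I * Complex.sin ((f x y : ℝ) : ℂ) * (t : ℂ) * (Y1 y : ℂ) * (b11 x y : ℂ)) * hpy2 - (Complex.I*(2*(b12 x y : ℂ)*Complex.sin ((f x y : ℝ) : ℂ)*(t : ℂ)*Complex.cos ((f x y : ℝ) : ℂ)*(Y1 y : ℂ) + 2*(b12 x y : ℂ)*Complex.sin ((f x y : ℝ) : ℂ)^2*(t : ℂ)*(Y2 y : ℂ) + 2*(b12 x y : ℂ)^2*Complex.sin ((f x y : ℝ) : ℂ) - 2*(b11 x y : ℂ)*(b22 x y : ℂ)*Complex.sin ((f x y : ℝ) : ℂ) - 2*(b11 x y : ℂ)*Complex.sin ((f x y : ℝ) : ℂ)*(t : ℂ)*Complex.cos ((f x y : ℝ) : ℂ)^2*(Y1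 y : ℂ)) + Complex.I*(Complex.I^2-1)*2*(b11 x y : ℂ)*Complex.sin ((f x y : ℝ) : ℂ)^3*(t : ℂ)*(Y1 y : ℂ)) * hI
end
end
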